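/- arXiv:2108.02447 — 6 statements merged into one kernel-verified Lean document; each statement's English description precedes it below -/
import Mathlib

section
/- If β ≥ 1, then for every fixed u ≥ 0 the map t ↦ L_t(u) is nondecreasing on (0,∞): for all 0 < s < t one has L_s(u) ≤ L_t(u). -/
open MeasureTheory Real Filter Set Topology Asymptotics

/-- The ATS Laplace transform `L_t(u)` with parameters `α ∈ (0,1)`, `k̄ > 0`, `β ∈ ℝ`,
where `k_t = k̄·t^β`. -/
noncomputable def ATSLaplace (α kbar β : ℝ) (t u : ℝ) : ℝ :=
  Real.exp ((t / (kbar * t ^ β)) * ((1 - α) / α) *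
    (1 - (1 + u * (kbar * t ^ β) / ((1 - α) * t)) ^ α))

/-- Standard normal cumulative distribution function. -/
noncomputable def stdN (z : ℝ) : ℝ :=
  (Real.sqrt (2 * Real.pi))⁻¹ * ∫ x in Set.Iic z, Real.exp (-x ^ 2 / 2)

/-- Standard normal probability density function. -/
noncomputable def stdNd (z : ℝ) : ℝ :=
  (Real.sqrt (2 * Real.pi))⁻¹ * Real.exp (-z ^ 2 / 2)

/-- The drift `φ_t`, defined by `φ_t·t = −ln L_t(t·σ̄²·η_t)` with `η_t = η̄·t^δ`. -/
noncomputable def ATSphi (α kbar σbar ηbar β δ : ℝ) (t : ℝ) : ℝ :=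
  -Real.log (ATSLaplace α kbar β t (t * σbar ^ 2 * (ηbar * t ^ δ))) / t

/-- The quantity `l_t^z = −σ̄·η_t·√(z·t) + φ_t·√t/(σ̄·√z)`. -/
noncomputable def ATSl (α kbar σbar ηbar β δ : ℝ) (t z : ℝ) : ℝ :=
  -(σbar * (ηbar * t ^ δ)) * Real.sqrt (z * t) +
    ATSphi α kbar σbar ηbar β δ t * Real.sqrt t / (σbar * Real.sqrt z)

/-- The ATM ATS call price `C_t`. -/
noncomputable def ATSCall (α kbar σbar ηbar β δ : ℝ) (μ : Measure ℝ) (t : ℝ) : ℝ :=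
  ∫ z, (Real.exp (ATSphi α kbar σbar ηbar β δ t * t - t * σbar ^ 2 * (ηbar * t ^ δ) * z) *
      stdN (ATSl α kbar σbar ηbar β δ t z + σbar * Real.sqrt (z * t) / 2) -
      stdN (ATSl α kbar σbar ηbar β δ t z - σbar * Real.sqrt (z * t) / 2)) ∂μ

/-- The skew term `ξ̂_t`. -/
noncomputable def ATSSkew (α kbar σbar ηbar β δ : ℝ) (μ : Measure ℝ) (σhat : ℝ → ℝ)
    (t : ℝ) : ℝ :=
  (stdN (-(σhat t * Real.sqrt t / 2)) -
      ∫ z, stdN (ATSl α kbar σbar ηbar β δ t z - σbar * Real.sqrt (z * t) / 2) ∂μ) /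
    stdNd (-(σhat t * Real.sqrt t / 2))

/-! Writing `k_t = k̄ t^β`, the exponent of `L_t(u)` is `c · (1 - (1 + a x)^α) / x` with
`x = t^(β-1)`, `a = u k̄ / (1 - α) ≥ 0` and `c = (1 - α) / (α k̄) > 0`. Since `x ↦ (1 + a x)^α` is
concave on `[0, ∞)`, its chord slope from `0`, `((1 + a x)^α - 1) / x`, decreases in `x`; and for
`β ≥ 1`, `x = t^(β-1)` increases with `t`. -/

lemma concaveOn_one_add_mul_rpow {a α : ℝ} (ha : 0 ≤ a) (hα0 : 0 ≤ α) (hα1 : α ≤ 1) :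
    ConcaveOn ℝ (Ici 0) fun x : ℝ => (1 + a * x) ^ α := by
  let g : ℝ →ᵃ[ℝ] ℝ := AffineMap.lineMap 1 (1 + a)
  have hg : ∀ x, g x = 1 + a * x := fun x => by
    simp only [g, AffineMap.lineMap_apply, vsub_eq_sub, add_sub_cancel_left, smul_eq_mul,
      vadd_eq_add]
    ring
  have hmaps : Ici (0 : ℝ) ⊆ g ⁻¹' Ici 0 := fun x (hx : 0 ≤ x) => by
    simp only [mem_preimage, mem_Ici, hg]
    positivity
  have := ((concaveOn_rpow hα0 hα1).comp_affineMap g).subset hmaps (convex_Ici 0)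
  simpa only [Function.comp_def, hg] using this

lemma one_sub_one_add_mul_rpow_div_le {a α x y : ℝ} (ha : 0 ≤ a) (hα0 : 0 ≤ α) (hα1 : α ≤ 1)
    (hx : 0 < x) (hxy : x ≤ y) :
    (1 - (1 + a * x) ^ α) / x ≤ (1 - (1 + a * y) ^ α) / y := by
  have := (concaveOn_one_add_mul_rpow ha hα0 hα1).neg.secant_mono (a := 0)
    (mem_Ici.2 le_rfl) (mem_Ici.2 hx.le) (mem_Ici.2 (hx.le.trans hxy)) hx.ne'
    (hx.trans_le hxy).ne' hxy
  simp only [Pi.neg_apply, mul_zero, add_zero, one_rpow, sub_zero] at this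
  rwa [neg_sub_neg, neg_sub_neg] at this

lemma ATSLaplace_eq (α kbar β u : ℝ) {t : ℝ} (ht : 0 < t) :
    ATSLaplace α kbar β t u = exp ((1 - α) / α / kbar *
      ((1 - (1 + u * kbar / (1 - α) * t ^ (β - 1)) ^ α) / t ^ (β - 1))) := by
  have htβ : t ^ β ≠ 0 := (rpow_pos_of_pos ht _).ne'
  rw [ATSLaplace, rpow_sub_one ht.ne']
  field_simp

/-- if `β ≥ 1` then for fixed `u ≥ 0` the map `t ↦ L_t(u)` is
nondecreasing on `(0,∞)`. -/
theorem stmt1 (α kbar β : ℝ) (hα : α ∈ Set.Ioo (0:ℝ) 1) (hk : 0 < kbar)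
    (hβ : 1 ≤ β) (u : ℝ) (hu : 0 ≤ u) :
    ∀ s t : ℝ, 0 < s → s < t →
      ATSLaplace α kbar β s u ≤ ATSLaplace α kbar β t u := by
  obtain ⟨hα0, hα1⟩ := hα
  intro s t hs hst
  rw [ATSLaplace_eq α kbar β u hs, ATSLaplace_eq α kbar β u (hs.trans hst), exp_le_exp]
  have h1α : 0 ≤ 1 - α := by linarith
  have hc : 0 ≤ (1 - α) / α / kbar := by positivity
  have ha : 0 ≤ u * kbar / (1 - α) := by positivity
  refine mul_le_mul_of_nonneg_left (one_sub_one_add_mul_rpow_div_le ha hα0.le hα1.le ?_ ?_) hc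
  · exact rpow_pos_of_pos hs _
  · exact rpow_le_rpow hs.le hst.le (by linarith)
end

section
/- Let (μ_t)_{t>0} be an ATS mixing family. If β < 1, then μ_t converges weakly (i.e. in distribution) to the Dirac measure at 0 as t → 0⁺; if β > 1, then μ_t converges weakly to the Dirac measure at 1 as t → 0⁺. -/
open MeasureTheory Real Filter Set Topology Asymptotics

/-!
With `s = k_t / t = k̄ t^(β-1)` one has `L_t(u) = exp (G_u s)`, where
`G_u s = s⁻¹ ((1-α)/α) (1 - (1 + u s/(1-α))^α)`. As `t → 0⁺`, `s → ∞` if `β < 1` and `s → 0⁺`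
if `β > 1`; `G_u → 0` at `∞` by subadditivity of `y ↦ y^α`, and `G_u → -u` at `0⁺` since
`s G_u s` vanishes at `0` with derivative `-u`. So the Laplace transforms converge to those of
`δ_0`, resp. `δ_1`.

Convergence at `u = 1, 2` alone forces `μ_t → δ_a`: it gives `∫ e^{-x} → e^{-a}` and
`∫ e^{-2x} → e^{-2a}`, so the second moment of `e^{-x} - e^{-a}` tends to `0`. By Chebyshev and
strict monotonicity of `e^{-x}`, `μ_t` concentrates near `a`, and a bounded continuous `f` is
close to `f a` there.
-/

open scoped BoundedContinuousFunction

section ConcentrationToDirac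

variable {ι X : Type*} [MeasurableSpace X] {l : Filter ι} {μ : ι → Measure X}

theorem tendsto_integral_of_tendsto_measureReal_le_dist [PseudoMetricSpace X]
    [OpensMeasurableSpace X] {a : X} (hprob : ∀ᶠ i in l, IsProbabilityMeasure (μ i))
    (hconc : ∀ δ > 0, Tendsto (fun i => (μ i).real {x | δ ≤ dist x a}) l (𝓝 0))
    (f : X →ᵇ ℝ) : Tendsto (fun i => ∫ x, f x ∂μ i) l (𝓝 (f a)) := by
  rw [Metric.tendsto_nhds]
  intro ε hε
  obtain ⟨δ, hδ, hfδ⟩ :=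
    Metric.continuousAt_iff.mp f.continuous.continuousAt (ε / 2) (half_pos hε)
  set S := {x | δ ≤ dist x a}
  have hS : MeasurableSet S :=
    (isClosed_le continuous_const (continuous_id.dist continuous_const)).measurableSet
  have hbound : ∀ x, |f x - f a| ≤ ε / 2 + 2 * ‖f‖ * S.indicator 1 x := by
    intro x
    by_cases hx : x ∈ S
    · rw [indicator_of_mem hx, Pi.one_apply, mul_one, ← Real.dist_eq]
      linarith [f.dist_le_two_norm x a]
    · rw [indicator_of_notMem hx, mul_zero, add_zero, ← Real.dist_eq]
      exact (hfδ (not_le.mp hx)).le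
  have hsmall : ∀ᶠ i in l, 2 * ‖f‖ * (μ i).real S < ε / 2 := by
    have := (hconc δ hδ).const_mul (2 * ‖f‖)
    rw [mul_zero] at this
    exact this.eventually_lt_const (half_pos hε)
  filter_upwards [hprob, hsmall] with i hi hi_small
  have hf_int : Integrable (fun x => f x - f a) (μ i) := (f.integrable _).sub (integrable_const _)
  have hbound_int : Integrable (fun x => ε / 2 + 2 * ‖f‖ * S.indicator 1 x) (μ i) :=
    (integrable_const _).add (((integrable_const 1).indicator hS).const_mul _)
  calc dist (∫ x, f x ∂μ i) (f a) = |∫ x, (f x - f a) ∂μ i| := by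
        rw [integral_sub (f.integrable _) (integrable_const _), Real.dist_eq]; simp
    _ ≤ ∫ x, |f x - f a| ∂μ i := abs_integral_le_integral_abs
    _ ≤ ∫ x, (ε / 2 + 2 * ‖f‖ * S.indicator 1 x) ∂μ i :=
        integral_mono hf_int.abs hbound_int hbound
    _ = ε / 2 + 2 * ‖f‖ * (μ i).real S := by
        rw [integral_add (integrable_const _) (((integrable_const 1).indicator hS).const_mul _),
          integral_const_mul, integral_indicator_one hS]; simp
    _ < ε := by linarith

theorem tendsto_measureReal_le_abs_sub_of_tendsto_integral_sq {Y : X → ℝ} {c : ℝ}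
    (hint : ∀ᶠ i in l, Integrable (fun x => (Y x - c) ^ 2) (μ i))
    (h : Tendsto (fun i => ∫ x, (Y x - c) ^ 2 ∂μ i) l (𝓝 0)) {ε : ℝ} (hε : 0 < ε) :
    Tendsto (fun i => (μ i).real {x | ε ≤ |Y x - c|}) l (𝓝 0) := by
  have hset : {x | ε ≤ |Y x - c|} = {x | ε ^ 2 ≤ (Y x - c) ^ 2} := by
    ext x; simp [sq_le_sq, abs_of_pos hε]
  have hupper : Tendsto (fun i => (∫ x, (Y x - c) ^ 2 ∂μ i) / ε ^ 2) l (𝓝 0) := by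
    simpa using h.div_const (ε ^ 2)
  refine tendsto_of_tendsto_of_tendsto_of_le_of_le' tendsto_const_nhds hupper
    (Eventually.of_forall fun i => measureReal_nonneg) ?_
  filter_upwards [hint] with i hi
  rw [hset, le_div_iff₀ (by positivity), mul_comm]
  exact mul_meas_ge_le_integral_of_nonneg (Eventually.of_forall fun x => sq_nonneg _) hi _

section SecondMoment

variable {ν : Measure X} {Y : X → ℝ}

theorem integrable_sub_const_sq [IsFiniteMeasure ν] (h1 : Integrable Y ν)
    (h2 : Integrable (fun x => Y x ^ 2) ν) (c : ℝ) :
    Integrable (fun x => (Y x - c) ^ 2) ν :=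
  ((h2.sub (h1.const_mul (2 * c))).add (integrable_const (c ^ 2))).congr
    (ae_of_all _ fun x => by simp only [Pi.add_apply, Pi.sub_apply]; ring)

theorem integral_sub_const_sq [IsProbabilityMeasure ν] (h1 : Integrable Y ν)
    (h2 : Integrable (fun x => Y x ^ 2) ν) (c : ℝ) :
    ∫ x, (Y x - c) ^ 2 ∂ν = ∫ x, Y x ^ 2 ∂ν - 2 * c * ∫ x, Y x ∂ν + c ^ 2 := by
  have hint : Integrable (fun x => Y x ^ 2 - 2 * c * Y x) ν := h2.sub (h1.const_mul _)
  calc ∫ x, (Y x - c) ^ 2 ∂ν = ∫ x, (Y x ^ 2 - 2 * c * Y x + c ^ 2) ∂ν :=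
        integral_congr_ae (ae_of_all _ fun x => by ring)
    _ = _ := by
        rw [integral_add hint (integrable_const _), integral_sub h2 (h1.const_mul _),
          integral_const_mul, integral_const]
        simp

end SecondMoment

theorem tendsto_integral_sub_const_sq_of_tendsto {Y : X → ℝ} {c : ℝ}
    (hprob : ∀ᶠ i in l, IsProbabilityMeasure (μ i))
    (h1 : Tendsto (fun i => ∫ x, Y x ∂μ i) l (𝓝 c))
    (h2 : Tendsto (fun i => ∫ x, Y x ^ 2 ∂μ i) l (𝓝 (c ^ 2)))
    (hint1 : ∀ᶠ i in l, Integrable Y (μ i))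
    (hint2 : ∀ᶠ i in l, Integrable (fun x => Y x ^ 2) (μ i)) :
    Tendsto (fun i => ∫ x, (Y x - c) ^ 2 ∂μ i) l (𝓝 0) := by
  have hlim := (h2.sub (h1.const_mul (2 * c))).add_const (c ^ 2)
  rw [show c ^ 2 - 2 * c * c + c ^ 2 = 0 by ring] at hlim
  refine hlim.congr' ?_
  filter_upwards [hprob, hint1, hint2] with i _ hi1 hi2
  exact (integral_sub_const_sq hi1 hi2 c).symm

end ConcentrationToDirac

theorem StrictAnti.exists_pos_le_abs_sub {g : ℝ → ℝ} (hg : StrictAnti g) (a : ℝ) {δ : ℝ}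
    (hδ : 0 < δ) : ∃ ε > 0, ∀ x, δ ≤ |x - a| → ε ≤ |g x - g a| := by
  have hleft : g a < g (a - δ) := hg (by linarith)
  have hright : g (a + δ) < g a := hg (by linarith)
  refine ⟨min (g (a - δ) - g a) (g a - g (a + δ)), lt_min (by linarith) (by linarith), ?_⟩
  intro x hx
  rcases le_abs'.mp hx with hx | hx
  · have : g (a - δ) ≤ g x := hg.antitone (by linarith)
    exact (min_le_left _ _).trans (by rw [abs_of_nonneg (by linarith)]; linarith)
  · have : g x ≤ g (a + δ) := hg.antitone (by linarith)
    exact (min_le_right _ _).trans (by rw [abs_of_nonpos (by linarith)]; linarith)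

theorem tendsto_integral_of_tendsto_laplace {ι : Type*} {l : Filter ι} {μ : ι → Measure ℝ}
    {a : ℝ} (hprob : ∀ᶠ i in l, IsProbabilityMeasure (μ i))
    (hlap : ∀ u > 0, Tendsto (fun i => ∫ x, exp (-u * x) ∂μ i) l (𝓝 (exp (-u * a))))
    (f : ℝ →ᵇ ℝ) : Tendsto (fun i => ∫ x, f x ∂μ i) l (𝓝 (f a)) := by
  have hsq : ∀ x : ℝ, exp (-x) ^ 2 = exp (-2 * x) := fun x => by rw [← exp_nat_mul]; ring_nf
  have h1 : Tendsto (fun i => ∫ x, exp (-x) ∂μ i) l (𝓝 (exp (-a))) := by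
    simpa using hlap 1 one_pos
  have h2 : Tendsto (fun i => ∫ x, exp (-x) ^ 2 ∂μ i) l (𝓝 (exp (-a) ^ 2)) := by
    simpa only [hsq] using hlap 2 two_pos
  have hint1 : ∀ᶠ i in l, Integrable (fun x => exp (-x)) (μ i) :=
    (h1.eventually_ne (exp_pos _).ne').mono fun _ => Integrable.of_integral_ne_zero
  have hint2 : ∀ᶠ i in l, Integrable (fun x => exp (-x) ^ 2) (μ i) :=
    (h2.eventually_ne (by positivity)).mono fun _ => Integrable.of_integral_ne_zero
  have hvar := tendsto_integral_sub_const_sq_of_tendsto hprob h1 h2 hint1 hint2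
  refine tendsto_integral_of_tendsto_measureReal_le_dist hprob (fun δ hδ => ?_) f
  obtain ⟨ε, hε, hsep⟩ :=
    (exp_strictMono.comp_strictAnti strictMono_id.neg).exists_pos_le_abs_sub a hδ
  have hconc := tendsto_measureReal_le_abs_sub_of_tendsto_integral_sq
    (hprob.and (hint1.and hint2) |>.mono fun i ⟨_, hi1, hi2⟩ =>
      integrable_sub_const_sq hi1 hi2 _) hvar hε
  refine tendsto_of_tendsto_of_tendsto_of_le_of_le' tendsto_const_nhds hconc
    (Eventually.of_forall fun i => measureReal_nonneg) ?_
  filter_upwards [hprob] with i _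
  exact measureReal_mono fun x hx => hsep x (by simpa [Real.dist_eq] using hx)

noncomputable def atsExponent (α u s : ℝ) : ℝ :=
  s⁻¹ * ((1 - α) / α) * (1 - (1 + u * s / (1 - α)) ^ α)

theorem ATSLaplace_eq_exp_atsExponent (α kbar β u : ℝ) {t : ℝ} (ht : 0 < t) :
    ATSLaplace α kbar β t u = exp (atsExponent α u (kbar * t ^ (β - 1))) := by
  have hβ : t ^ β = t ^ (β - 1) * t := by rw [← rpow_add_one ht.ne']; ring_nf
  have hpow : t ^ (β - 1) ≠ 0 := (rpow_pos_of_pos ht _).ne'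
  unfold ATSLaplace atsExponent
  rw [hβ]
  congr 3 <;> field_simp

theorem tendsto_atsExponent_atTop {α u : ℝ} (hα : α ∈ Ioo (0 : ℝ) 1) (hu : 0 ≤ u) :
    Tendsto (atsExponent α u) atTop (𝓝 0) := by
  obtain ⟨hα0, hα1⟩ := hα
  have h1α : 0 < 1 - α := by linarith
  set C := (1 - α) / α * (u / (1 - α)) ^ α
  have hlower : Tendsto (fun s : ℝ => -(C * s ^ (α - 1))) atTop (𝓝 0) := by
    simpa using ((tendsto_rpow_neg_atTop h1α).const_mul C).neg
  refine tendsto_of_tendsto_of_tendsto_of_le_of_le' hlower tendsto_const_nhds ?_ ?_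
  all_goals filter_upwards [eventually_gt_atTop 0] with s hs
  · have hx : 0 ≤ u * s / (1 - α) := by positivity
    have hsub : (1 + u * s / (1 - α)) ^ α ≤ 1 + (u / (1 - α)) ^ α * s ^ α := by
      have := rpow_add_le_add_rpow zero_le_one hx hα0.le hα1.le
      rwa [one_rpow, mul_div_right_comm, mul_rpow (by positivity) hs.le,
        ← mul_div_right_comm] at this
    have hs' : s ^ (α - 1) = s⁻¹ * s ^ α := by
      rw [rpow_sub_one hs.ne', div_eq_inv_mul]
    rw [hs']
    unfold atsExponent
    have hP : 0 ≤ s⁻¹ * ((1 - α) / α) := by positivity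
    nlinarith [mul_le_mul_of_nonneg_left hsub hP]
  · have h1 : 1 ≤ (1 + u * s / (1 - α)) ^ α :=
      one_le_rpow (by linarith [show 0 ≤ u * s / (1 - α) by positivity]) hα0.le
    have hP : 0 ≤ s⁻¹ * ((1 - α) / α) := by positivity
    exact mul_nonpos_of_nonneg_of_nonpos hP (by linarith)

theorem tendsto_atsExponent_nhdsGT_zero {α : ℝ} (hα : α ∈ Ioo (0 : ℝ) 1) (u : ℝ) :
    Tendsto (atsExponent α u) (𝓝[>] 0) (𝓝 (-u)) := by
  obtain ⟨hα0, hα1⟩ := hα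
  have h1α : 1 - α ≠ 0 := by linarith
  have hderiv : HasDerivAt (fun s : ℝ => (1 + u * s / (1 - α)) ^ α) (u / (1 - α) * α) 0 := by
    have hin : HasDerivAt (fun s : ℝ => 1 + u * s / (1 - α)) (u / (1 - α)) 0 := by
      simpa using ((hasDerivAt_id (0 : ℝ)).const_mul u |>.div_const (1 - α)).const_add 1
    simpa using hin.rpow_const (p := α) (Or.inl (by simp))
  have hlim := (hderiv.tendsto_slope_zero_right).const_mul (-((1 - α) / α))
  rw [show -((1 - α) / α) * (u / (1 - α) * α) = -u by field_simp] at hlim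
  refine hlim.congr fun s => ?_
  simp only [atsExponent, zero_add, mul_zero, zero_div, add_zero, one_rpow, smul_eq_mul]
  ring

theorem tendsto_ATSLaplace_of_lt_one {α kbar β : ℝ} (hα : α ∈ Ioo (0 : ℝ) 1) (hk : 0 < kbar)
    (hβ : β < 1) {u : ℝ} (hu : 0 ≤ u) :
    Tendsto (fun t => ATSLaplace α kbar β t u) (𝓝[>] 0) (𝓝 1) := by
  have hscale : Tendsto (fun t : ℝ => kbar * t ^ (β - 1)) (𝓝[>] 0) atTop :=
    (tendsto_rpow_neg_nhdsGT_zero (by linarith)).const_mul_atTop hk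
  have hlim := (continuous_exp.tendsto 0).comp ((tendsto_atsExponent_atTop hα hu).comp hscale)
  rw [exp_zero] at hlim
  refine hlim.congr' ?_
  filter_upwards [self_mem_nhdsWithin] with t ht
  exact (ATSLaplace_eq_exp_atsExponent α kbar β u ht).symm

theorem tendsto_ATSLaplace_of_one_lt {α kbar β : ℝ} (hα : α ∈ Ioo (0 : ℝ) 1) (hk : 0 < kbar)
    (hβ : 1 < β) (u : ℝ) :
    Tendsto (fun t => ATSLaplace α kbar β t u) (𝓝[>] 0) (𝓝 (exp (-u))) := by
  have hscale : Tendsto (fun t : ℝ => kbar * t ^ (β - 1)) (𝓝[>] 0) (𝓝[>] 0) := by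
    refine tendsto_nhdsWithin_of_tendsto_nhds_of_eventually_within _ ?_ ?_
    · have hcont : ContinuousAt (fun t : ℝ => kbar * t ^ (β - 1)) 0 :=
        continuousAt_const.mul (continuousAt_rpow_const 0 (β - 1) (Or.inr (by linarith)))
      simpa [zero_rpow (by linarith : β - 1 ≠ 0)] using hcont.tendsto.mono_left nhdsWithin_le_nhds
    · filter_upwards [self_mem_nhdsWithin] with t ht
      exact mul_pos hk (rpow_pos_of_pos ht _)
  refine ((continuous_exp.tendsto (-u)).comp
    ((tendsto_atsExponent_nhdsGT_zero hα u).comp hscale)).congr' ?_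
  filter_upwards [self_mem_nhdsWithin] with t ht
  exact (ATSLaplace_eq_exp_atsExponent α kbar β u ht).symm

theorem stmt2_general (α kbar β : ℝ) (hα : α ∈ Set.Ioo (0:ℝ) 1) (hk : 0 < kbar)
    (μ : ℝ → Measure ℝ)
    (hprob : ∀ t > 0, IsProbabilityMeasure (μ t))
    (hlap : ∀ t > 0, ∀ u ≥ 0,
      (∫ x, Real.exp (-u * x) ∂(μ t)) = ATSLaplace α kbar β t u) :
    (β < 1 → ∀ f : BoundedContinuousFunction ℝ ℝ,
        Tendsto (fun t => ∫ x, f x ∂(μ t)) (𝓝[>] (0:ℝ)) (𝓝 (f 0))) ∧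
    (1 < β → ∀ f : BoundedContinuousFunction ℝ ℝ,
        Tendsto (fun t => ∫ x, f x ∂(μ t)) (𝓝[>] (0:ℝ)) (𝓝 (f 1))) := by
  have hprob' : ∀ᶠ t in 𝓝[>] (0 : ℝ), IsProbabilityMeasure (μ t) :=
    eventually_mem_nhdsWithin.mono hprob
  have hlap' : ∀ u > 0, (fun t => ATSLaplace α kbar β t u) =ᶠ[𝓝[>] 0]
      fun t => ∫ x, exp (-u * x) ∂μ t := fun u hu =>
    eventually_mem_nhdsWithin.mono fun t ht => (hlap t ht u hu.le).symm
  refine ⟨fun hβ f => ?_, fun hβ f => ?_⟩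
  · refine tendsto_integral_of_tendsto_laplace hprob' (fun u hu => ?_) f
    rw [mul_zero, exp_zero]
    exact (tendsto_ATSLaplace_of_lt_one hα hk hβ hu.le).congr' (hlap' u hu)
  · refine tendsto_integral_of_tendsto_laplace hprob' (fun u hu => ?_) f
    rw [mul_one]
    exact (tendsto_ATSLaplace_of_one_lt hα hk hβ u).congr' (hlap' u hu)

/-- for an ATS mixing family, if `β < 1` then `μ_t` converges weakly to
the Dirac measure at `0` as `t → 0⁺`; if `β > 1`, it converges weakly to the Dirac
measure at `1`. -/
theorem stmt2 (α kbar β : ℝ) (hα : α ∈ Set.Ioo (0:ℝ) 1) (hk : 0 < kbar)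
    (μ : ℝ → Measure ℝ)
    (hprob : ∀ t > 0, IsProbabilityMeasure (μ t))
    (hsupp : ∀ t > 0, μ t (Set.Iio 0) = 0)
    (hlap : ∀ t > 0, ∀ u ≥ 0,
      (∫ x, Real.exp (-u * x) ∂(μ t)) = ATSLaplace α kbar β t u) :
    (β < 1 → ∀ f : BoundedContinuousFunction ℝ ℝ,
        Tendsto (fun t => ∫ x, f x ∂(μ t)) (𝓝[>] (0:ℝ)) (𝓝 (f 0))) ∧
    (1 < β → ∀ f : BoundedContinuousFunction ℝ ℝ,
        Tendsto (fun t => ∫ x, f x ∂(μ t)) (𝓝[>] (0:ℝ)) (𝓝 (f 1))) :=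
  stmt2_general α kbar β hα hk μ hprob hlap
end

section
/- Let X be a nonnegative real random variable and s ∈ (0,1) with E[X^s] < ∞. Then E[X^s] = ∫_0^∞ (E[e^{−u·X}] − 1)/(Γ(−s)·u^{s+1}) du, where Γ denotes the Gamma function (note Γ(−s) < 0 for s ∈ (0,1)). -/
open MeasureTheory Real Filter Set Topology Asymptotics

/-!
For `x ≥ 0` the substitution `v = u x` and an integration by parts give
`∫₀^∞ (1 - e^{-ux}) u^{-s-1} du = x^s ∫₀^∞ e^{-v} v^{-s} dv / s = x^s Γ(1-s) / s`,
and `Γ(1-s) = -s Γ(-s)` turns this into `x^s = ∫₀^∞ (e^{-ux} - 1) / (Γ(-s) u^{s+1}) du`.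
The integrand is nonnegative, so applied to `x = X ω` its absolute integral over `(0,∞) × Ω`
is `E[X^s] < ∞`, and Fubini exchanges the expectation with the `du`-integral.
-/

lemma integrableOn_one_sub_exp_neg_mul_rpow {s : ℝ} (hs0 : 0 < s) (hs1 : s < 1) :
    IntegrableOn (fun v : ℝ => (1 - exp (-v)) * v ^ (-s - 1)) (Ioi 0) := by
  have hmeas : AEStronglyMeasurable (fun v : ℝ => (1 - exp (-v)) * v ^ (-s - 1)) := by
    fun_prop
  rw [← Ioc_union_Ioi_eq_Ioi zero_le_one, integrableOn_union,
    integrableOn_Ioc_iff_integrableOn_Ioo]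
  constructor
  · refine ((intervalIntegral.integrableOn_Ioo_rpow_iff zero_lt_one).2
      (by linarith : -1 < -s)).mono' hmeas.restrict ?_
    filter_upwards [ae_restrict_mem measurableSet_Ioo] with v ⟨hv0, _⟩
    have hexp : exp (-v) ≤ 1 := exp_le_one_iff.2 (by linarith)
    rw [norm_of_nonneg (mul_nonneg (by linarith) (by positivity))]
    calc (1 - exp (-v)) * v ^ (-s - 1) ≤ v * v ^ (-s - 1) := by
          gcongr; linarith [one_sub_le_exp_neg v]
      _ = v ^ (-s) := by rw [← rpow_one_add' hv0.le (by linarith)]; ring_nf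
  · refine (integrableOn_Ioi_rpow_of_lt (by linarith : -s - 1 < -1) zero_lt_one).mono'
      hmeas.restrict ?_
    filter_upwards [ae_restrict_mem measurableSet_Ioi] with v (hv : 1 < v)
    have hexp : exp (-v) ≤ 1 := exp_le_one_iff.2 (by linarith)
    rw [norm_of_nonneg (mul_nonneg (by linarith) (by positivity))]
    exact mul_le_of_le_one_left (by positivity) (by linarith [exp_pos (-v)])

lemma tendsto_one_sub_exp_neg_mul_rpow_nhdsGT_zero {s : ℝ} (hs1 : s < 1) :
    Tendsto (fun v : ℝ => (1 - exp (-v)) * v ^ (-s)) (𝓝[>] 0) (𝓝 0) := by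
  have hpow : Tendsto (fun v : ℝ => v ^ (1 - s)) (𝓝[>] 0) (𝓝 0) := by
    simpa [zero_rpow (by linarith : 1 - s ≠ 0)] using
      ((continuousAt_rpow_const 0 (1 - s) (Or.inr (by linarith))).tendsto).mono_left
        nhdsWithin_le_nhds
  refine squeeze_zero' ?_ ?_ hpow
  · filter_upwards [self_mem_nhdsWithin] with v (hv : 0 < v)
    exact mul_nonneg (by linarith [exp_le_one_iff.2 (neg_nonpos.2 hv.le)]) (by positivity)
  · filter_upwards [self_mem_nhdsWithin] with v (hv : 0 < v)
    calc (1 - exp (-v)) * v ^ (-s) ≤ v * v ^ (-s) := by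
          gcongr; linarith [one_sub_le_exp_neg v]
      _ = v ^ (1 - s) := by rw [← rpow_one_add' hv.le (by linarith)]; ring_nf

lemma tendsto_one_sub_exp_neg_mul_rpow_atTop {s : ℝ} (hs0 : 0 < s) :
    Tendsto (fun v : ℝ => (1 - exp (-v)) * v ^ (-s)) atTop (𝓝 0) := by
  refine squeeze_zero' ?_ ?_ (tendsto_rpow_neg_atTop hs0)
  · filter_upwards [eventually_ge_atTop 0] with v hv
    exact mul_nonneg (by linarith [exp_le_one_iff.2 (neg_nonpos.2 hv)]) (by positivity)
  · filter_upwards [eventually_ge_atTop 0] with v hv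
    exact mul_le_of_le_one_left (by positivity) (by linarith [exp_pos (-v)])

lemma integral_one_sub_exp_neg_mul_rpow {s : ℝ} (hs0 : 0 < s) (hs1 : s < 1) :
    ∫ v in Ioi (0 : ℝ), (1 - exp (-v)) * v ^ (-s - 1) = Gamma (1 - s) / s := by
  have hu : ∀ v ∈ Ioi (0 : ℝ), HasDerivAt (fun v => 1 - exp (-v)) (exp (-v)) v :=
    fun v _ => by simpa using ((hasDerivAt_neg v).exp).const_sub 1
  have hw : ∀ v ∈ Ioi (0 : ℝ), HasDerivAt (fun v => v ^ (-s) * -s⁻¹) (v ^ (-s - 1)) v :=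
    fun v hv =>
      ((hasDerivAt_rpow_const (Or.inl hv.ne')).mul_const (-s⁻¹)).congr_deriv (by field_simp)
  have hGamma : IntegrableOn (fun v : ℝ => exp (-v) * v ^ (-s)) (Ioi 0) := by
    simpa using GammaIntegral_convergent (s := 1 - s) (by linarith)
  rw [integral_Ioi_mul_deriv_eq_deriv_mul hu hw (integrableOn_one_sub_exp_neg_mul_rpow hs0 hs1)
    (by simpa only [IntegrableOn, Pi.mul_def, mul_assoc] using hGamma.mul_const (-s⁻¹))
    (by simpa [Pi.mul_def, mul_assoc] using
      (tendsto_one_sub_exp_neg_mul_rpow_nhdsGT_zero hs1).mul_const (-s⁻¹))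
    (by simpa [Pi.mul_def, mul_assoc] using
      (tendsto_one_sub_exp_neg_mul_rpow_atTop hs0).mul_const (-s⁻¹))]
  simp_rw [← mul_assoc]
  rw [integral_mul_const, Gamma_eq_integral (by linarith), show 1 - s - 1 = -s by ring]
  field_simp
  ring

lemma one_sub_exp_neg_mul_rpow_eq_scale {s x u : ℝ} (hx : 0 < x) (hu : 0 < u) :
    (1 - exp (-(u * x))) * u ^ (-s - 1) =
      x ^ (s + 1) * ((1 - exp (-(u * x))) * (u * x) ^ (-s - 1)) := by
  have hx1 : x ^ (s + 1) * x ^ (-s - 1) = 1 := by rw [← rpow_add hx]; ring_nf; exact rpow_zero x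
  rw [mul_rpow hu.le hx.le]
  linear_combination (-(1 - exp (-(u * x))) * u ^ (-s - 1)) * hx1

lemma integrableOn_one_sub_exp_neg_mul_mul_rpow {s x : ℝ} (hs0 : 0 < s) (hs1 : s < 1)
    (hx : 0 ≤ x) : IntegrableOn (fun u : ℝ => (1 - exp (-(u * x))) * u ^ (-s - 1)) (Ioi 0) := by
  rcases hx.eq_or_lt with rfl | hx
  · simp
  have hcomp := (integrableOn_Ioi_comp_mul_right_iff
    (fun v : ℝ => (1 - exp (-v)) * v ^ (-s - 1)) 0 hx).2
    (by simpa using integrableOn_one_sub_exp_neg_mul_rpow hs0 hs1)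
  exact IntegrableOn.congr_fun (hcomp.const_mul (x ^ (s + 1)))
    (fun u hu => (one_sub_exp_neg_mul_rpow_eq_scale hx hu).symm) measurableSet_Ioi

lemma integral_one_sub_exp_neg_mul_mul_rpow {s x : ℝ} (hs0 : 0 < s) (hs1 : s < 1)
    (hx : 0 ≤ x) :
    ∫ u in Ioi (0 : ℝ), (1 - exp (-(u * x))) * u ^ (-s - 1) = x ^ s * (Gamma (1 - s) / s) := by
  rcases hx.eq_or_lt with rfl | hx
  · simp [zero_rpow hs0.ne']
  rw [setIntegral_congr_fun measurableSet_Ioi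
      (fun u hu => one_sub_exp_neg_mul_rpow_eq_scale hx hu), integral_const_mul,
    integral_comp_mul_right_Ioi (fun v => (1 - exp (-v)) * v ^ (-s - 1)) 0 hx, zero_mul,
    integral_one_sub_exp_neg_mul_rpow hs0 hs1, smul_eq_mul, ← mul_assoc, ← rpow_neg_one,
    ← rpow_add hx]
  ring_nf

noncomputable def rpowLaplaceKernel (s x u : ℝ) : ℝ :=
  (exp (-u * x) - 1) / (Gamma (-s) * u ^ (s + 1))

lemma Gamma_one_sub_eq_neg_mul_Gamma_neg {s : ℝ} (hs : s ≠ 0) :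
    Gamma (1 - s) = -s * Gamma (-s) := by
  rw [← Gamma_add_one (neg_ne_zero.2 hs), neg_add_eq_sub]

lemma rpowLaplaceKernel_eq {s u : ℝ} (hs0 : 0 < s) (hs1 : s < 1) (x : ℝ) (hu : 0 < u) :
    rpowLaplaceKernel s x u = s / Gamma (1 - s) * ((1 - exp (-(u * x))) * u ^ (-s - 1)) := by
  have hG := Gamma_one_sub_eq_neg_mul_Gamma_neg hs0.ne'
  have hG₀ : Gamma (-s) ≠ 0 := by
    intro h
    exact (Gamma_pos_of_pos (by linarith : 0 < 1 - s)).ne' (by rw [hG, h, mul_zero])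
  rw [rpowLaplaceKernel, hG, show -s - 1 = -(s + 1) by ring, rpow_neg hu.le, neg_mul]
  field_simp
  ring

lemma rpowLaplaceKernel_nonneg {s x u : ℝ} (hs0 : 0 < s) (hs1 : s < 1) (hx : 0 ≤ x)
    (hu : 0 < u) : 0 ≤ rpowLaplaceKernel s x u := by
  have hexp : exp (-(u * x)) ≤ 1 := exp_le_one_iff.2 (by nlinarith)
  rw [rpowLaplaceKernel_eq hs0 hs1 x hu]
  have := Gamma_pos_of_pos (by linarith : 0 < 1 - s)
  exact mul_nonneg (by positivity) (mul_nonneg (by linarith) (by positivity))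

lemma integrableOn_rpowLaplaceKernel {s x : ℝ} (hs0 : 0 < s) (hs1 : s < 1) (hx : 0 ≤ x) :
    IntegrableOn (rpowLaplaceKernel s x) (Ioi 0) :=
  IntegrableOn.congr_fun ((integrableOn_one_sub_exp_neg_mul_mul_rpow hs0 hs1 hx).const_mul _)
    (fun _ hu => (rpowLaplaceKernel_eq hs0 hs1 x hu).symm) measurableSet_Ioi

lemma integral_rpowLaplaceKernel {s x : ℝ} (hs0 : 0 < s) (hs1 : s < 1) (hx : 0 ≤ x) :
    ∫ u in Ioi (0 : ℝ), rpowLaplaceKernel s x u = x ^ s := by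
  have hG := (Gamma_pos_of_pos (by linarith : 0 < 1 - s)).ne'
  rw [setIntegral_congr_fun measurableSet_Ioi (fun _ hu => rpowLaplaceKernel_eq hs0 hs1 x hu),
    integral_const_mul, integral_one_sub_exp_neg_mul_mul_rpow hs0 hs1 hx]
  field_simp

lemma integrable_rpowLaplaceKernel_prod {Ω : Type*} [MeasurableSpace Ω] {P : Measure Ω}
    [SFinite P] {X : Ω → ℝ} {s : ℝ} (hs0 : 0 < s) (hs1 : s < 1) (hXm : Measurable X)
    (hX : ∀ ω, 0 ≤ X ω) (hint : Integrable (fun ω => X ω ^ s) P) :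
    Integrable (Function.uncurry fun u ω => rpowLaplaceKernel s (X ω) u)
      ((volume.restrict (Ioi 0)).prod P) := by
  have hmeas : Measurable (Function.uncurry fun u ω => rpowLaplaceKernel s (X ω) u) := by
    unfold rpowLaplaceKernel Function.uncurry; fun_prop
  refine (integrable_prod_iff' hmeas.aestronglyMeasurable).2
    ⟨ae_of_all _ fun ω => integrableOn_rpowLaplaceKernel hs0 hs1 (hX ω), hint.congr ?_⟩
  refine ae_of_all _ fun ω => ?_
  show X ω ^ s = ∫ u in Ioi 0, ‖rpowLaplaceKernel s (X ω) u‖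
  rw [← integral_rpowLaplaceKernel hs0 hs1 (hX ω)]
  exact setIntegral_congr_fun measurableSet_Ioi fun u hu =>
    (norm_of_nonneg (rpowLaplaceKernel_nonneg hs0 hs1 (hX ω) hu)).symm

/-- for a nonnegative random variable `X` and `s ∈ (0,1)` with
`E[X^s] < ∞`, one has `E[X^s] = ∫_0^∞ (E[e^{−u·X}] − 1)/(Γ(−s)·u^{s+1}) du`. -/
theorem stmt4 {Ω : Type*} [MeasurableSpace Ω] (P : Measure Ω) [IsProbabilityMeasure P]
    (X : Ω → ℝ) (hXm : Measurable X) (hX : ∀ ω, 0 ≤ X ω)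
    (s : ℝ) (hs : s ∈ Set.Ioo (0:ℝ) 1)
    (hint : Integrable (fun ω => X ω ^ s) P) :
    (∫ ω, X ω ^ s ∂P) =
      ∫ u in Set.Ioi (0:ℝ),
        ((∫ ω, Real.exp (-u * X ω) ∂P) - 1) / (Real.Gamma (-s) * u ^ (s + 1)) := by
  obtain ⟨hs0, hs1⟩ := hs
  have hLaplace : ∀ u ∈ Ioi (0 : ℝ), Integrable (fun ω => exp (-u * X ω)) P := fun u hu =>
    Integrable.of_bound (by fun_prop) 1 (ae_of_all _ fun ω => by
      rw [norm_of_nonneg (exp_pos _).le, exp_le_one_iff]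
      nlinarith [hX ω, mem_Ioi.1 hu])
  calc ∫ ω, X ω ^ s ∂P
        = ∫ ω, (∫ u in Ioi (0 : ℝ), rpowLaplaceKernel s (X ω) u) ∂P := by
        simp_rw [integral_rpowLaplaceKernel hs0 hs1 (hX _)]
    _ = ∫ u in Ioi (0 : ℝ), ∫ ω, rpowLaplaceKernel s (X ω) u ∂P :=
        (integral_integral_swap (integrable_rpowLaplaceKernel_prod hs0 hs1 hXm hX hint)).symm
    _ = _ := setIntegral_congr_fun measurableSet_Ioi fun u hu => by
        simp only [rpowLaplaceKernel]
        rw [integral_div, integral_sub (hLaplace u hu) (integrable_const 1)]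
        simp
end

section
/- Assume δ > −min(1,β). Then, as t → 0⁺, φ_t·t = t·σ̄²·η_t − t·σ̄⁴·η_t²·k_t/2 + O(t·η_t³·k_t²); that is, the function t ↦ φ_t·t − t·σ̄²·η_t + t·σ̄⁴·η_t²·k_t/2 is big-O of t ↦ t·η_t³·k_t² as t → 0⁺. -/
open MeasureTheory Real Filter Set Topology Asymptotics

/-!
With `x_t := σ̄² η_t k_t / (1 - α) ≥ 0` one has
`φ_t t = (t / k_t) ((1 - α) / α) ((1 + x_t) ^ α - 1)`, and the two expansion terms `t σ̄² η_t`
and `t σ̄⁴ η_t² k_t / 2` are exactly what the first- and second-order Taylor terms of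
`(1 + x) ^ α` at `0` contribute. The third derivative `α (α - 1) (α - 2) (1 + x) ^ (α - 3)` lies
in `[0, 2α]` for `x ≥ 0`, so the Taylor remainder is at most `α x³ / 3`, which gives the bound
with the explicit constant `σ̄⁶ / (3 (1 - α)²)` for every `t > 0`.
-/

lemma le_of_hasDerivAt_le_of_nonneg {f g f' g' : ℝ → ℝ}
    (hf : ∀ x, 0 ≤ x → HasDerivAt f (f' x) x) (hg : ∀ x, 0 ≤ x → HasDerivAt g (g' x) x)
    (h₀ : f 0 ≤ g 0) (hle : ∀ x, 0 ≤ x → f' x ≤ g' x) {x : ℝ} (hx : 0 ≤ x) : f x ≤ g x := by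
  have hd : ∀ y, 0 ≤ y → HasDerivAt (g - f) (g' y - f' y) y :=
    fun y hy => (hg y hy).sub (hf y hy)
  have hmono : MonotoneOn (g - f) (Ici 0) := by
    refine monotoneOn_of_hasDerivWithinAt_nonneg (f' := g' - f') (convex_Ici 0)
      (fun y hy => (hd y hy).continuousAt.continuousWithinAt) (fun y hy => ?_) (fun y hy => ?_)
    all_goals rw [interior_Ici] at hy
    · exact (hd y hy.le).hasDerivWithinAt
    · exact sub_nonneg.2 (hle y hy.le)
  have := hmono self_mem_Ici hx hx
  simp only [Pi.sub_apply] at this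
  linarith

lemma nonneg_and_le_of_hasDerivAt_le_pow {f f' : ℝ → ℝ} {c : ℝ} {n : ℕ}
    (hf : ∀ x, 0 ≤ x → HasDerivAt f (f' x) x) (hf₀ : f 0 = 0)
    (hf'₀ : ∀ x, 0 ≤ x → 0 ≤ f' x) (hf'c : ∀ x, 0 ≤ x → f' x ≤ c * x ^ n) :
    ∀ x, 0 ≤ x → 0 ≤ f x ∧ f x ≤ c / (n + 1) * x ^ (n + 1) := by
  have hpow : ∀ y, HasDerivAt (fun y => c / (n + 1) * y ^ (n + 1)) (c * y ^ n) y := fun y => by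
    refine ((hasDerivAt_pow (n + 1) y).const_mul (c / (n + 1))).congr_deriv ?_
    push_cast
    field_simp
  intro x hx
  exact ⟨le_of_hasDerivAt_le_of_nonneg (f' := fun _ => 0) (fun y _ => hasDerivAt_const y 0) hf
      hf₀.ge hf'₀ hx,
    le_of_hasDerivAt_le_of_nonneg hf (fun y _ => hpow y) (by simp [hf₀]) hf'c hx⟩

lemma abs_one_add_rpow_sub_taylor_le {α : ℝ} (hα₀ : 0 < α) (hα₁ : α < 1) {x : ℝ} (hx : 0 ≤ x) :
    |(1 + x) ^ α - (1 + α * x + α * (α - 1) / 2 * x ^ 2)| ≤ α / 3 * x ^ 3 := by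
  set c := α * (α - 1) * (α - 2)
  have hrpow : ∀ (p : ℝ) y, 0 ≤ y →
      HasDerivAt (fun z : ℝ => (1 + z) ^ p) (p * (1 + y) ^ (p - 1)) y := fun p y hy => by
    simpa using ((hasDerivAt_id y).const_add 1).rpow_const (p := p) (Or.inl (by positivity))
  -- Taylor remainders of orders 0, 1, 2 of `f''`, `f'`, `f` for `f = (1 + ·) ^ α`;
  -- each is the derivative of the next, and the remainder of `f'''` is integrated three times.
  set g₂ : ℝ → ℝ := fun y => α * (α - 1) * (1 + y) ^ (α - 2) - α * (α - 1)
  set g₁ : ℝ → ℝ := fun y => α * (1 + y) ^ (α - 1) - α - α * (α - 1) * y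
  set g₀ : ℝ → ℝ := fun y => (1 + y) ^ α - 1 - α * y - α * (α - 1) / 2 * y ^ 2
  have hd₂ : ∀ y, 0 ≤ y → HasDerivAt g₂ (c * (1 + y) ^ (α - 3)) y := fun y hy => by
    refine (((hrpow (α - 2) y hy).const_mul (α * (α - 1))).sub_const
      (α * (α - 1))).congr_deriv ?_
    rw [show α - 2 - 1 = α - 3 by ring]
    ring
  have hd₁ : ∀ y, 0 ≤ y → HasDerivAt g₁ (g₂ y) y := fun y hy => by
    refine ((((hrpow (α - 1) y hy).const_mul α).sub_const α).sub
      ((hasDerivAt_id y).const_mul (α * (α - 1)))).congr_deriv ?_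
    simp only [g₂, show α - 1 - 1 = α - 2 by ring]
    ring
  have hd₀ : ∀ y, 0 ≤ y → HasDerivAt g₀ (g₁ y) y := fun y hy => by
    refine ((((hrpow α y hy).sub_const 1).sub ((hasDerivAt_id y).const_mul α)).sub
      ((hasDerivAt_pow 2 y).const_mul (α * (α - 1) / 2))).congr_deriv ?_
    simp only [g₁]
    ring
  have hc₀ : 0 ≤ c := by
    have : 0 ≤ α * (1 - α) * (2 - α) :=
      mul_nonneg (mul_nonneg hα₀.le (by linarith)) (by linarith)
    linarith [show c = α * (1 - α) * (2 - α) by ring]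
  have hc : c ≤ 2 * α := by
    nlinarith [mul_nonneg (sq_nonneg α) (show (0:ℝ) ≤ 3 - α by linarith)]
  have h₂ := nonneg_and_le_of_hasDerivAt_le_pow (c := c) (n := 0) hd₂ (by simp [g₂])
    (fun y _ => mul_nonneg hc₀ (by positivity)) fun y hy => by
      rw [pow_zero, mul_one]
      exact mul_le_of_le_one_right hc₀ (rpow_le_one_of_one_le_of_nonpos (by linarith) (by linarith))
  have h₁ := nonneg_and_le_of_hasDerivAt_le_pow (c := c) (n := 1) hd₁ (by simp [g₁])
    (fun y hy => (h₂ y hy).1) fun y hy => by simpa using (h₂ y hy).2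
  obtain ⟨hlo, hhi⟩ := nonneg_and_le_of_hasDerivAt_le_pow (c := c / 2) (n := 2) hd₀
    (by simp [g₀]) (fun y hy => (h₁ y hy).1)
    (fun y hy => by simpa [one_add_one_eq_two] using (h₁ y hy).2) x hx
  have hx3 : 0 ≤ x ^ 3 := by positivity
  simp only [g₀] at hlo hhi
  norm_num at hhi
  rw [abs_le]
  constructor <;> nlinarith [mul_le_mul_of_nonneg_right hc hx3]

lemma ATSphi_mul_self {α kbar σbar ηbar β δ t : ℝ} (ht : t ≠ 0) :
    ATSphi α kbar σbar ηbar β δ t * t = t / (kbar * t ^ β) * ((1 - α) / α) *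
      ((1 + σbar ^ 2 * (ηbar * t ^ δ) * (kbar * t ^ β) / (1 - α)) ^ α - 1) := by
  have harg : t * σbar ^ 2 * (ηbar * t ^ δ) * (kbar * t ^ β) / ((1 - α) * t) =
      σbar ^ 2 * (ηbar * t ^ δ) * (kbar * t ^ β) / (1 - α) := by
    rw [mul_comm (1 - α), mul_assoc t, mul_assoc t, mul_div_mul_left _ _ ht]
  rw [ATSphi, ATSLaplace, Real.log_exp, div_mul_cancel₀ _ ht, harg]
  ring

theorem stmt6_general (α kbar σbar ηbar β δ : ℝ) (hα : α ∈ Set.Ioo (0:ℝ) 1)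
    (hk : 0 < kbar) (hη : 0 < ηbar) :
    (fun t => ATSphi α kbar σbar ηbar β δ t * t - t * σbar ^ 2 * (ηbar * t ^ δ) +
        t * σbar ^ 4 * (ηbar * t ^ δ) ^ 2 * (kbar * t ^ β) / 2)
      =O[𝓝[>] (0:ℝ)]
      (fun t => t * (ηbar * t ^ δ) ^ 3 * (kbar * t ^ β) ^ 2) := by
  obtain ⟨hα₀, hα₁⟩ := hα
  refine isBigO_iff.2 ⟨σbar ^ 6 / (3 * (1 - α) ^ 2), ?_⟩
  filter_upwards [self_mem_nhdsWithin] with t (ht : 0 < t)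
  rw [ATSphi_mul_self ht.ne']
  have hkt : 0 < kbar * t ^ β := mul_pos hk (rpow_pos_of_pos ht β)
  have hηt : 0 < ηbar * t ^ δ := mul_pos hη (rpow_pos_of_pos ht δ)
  set kt := kbar * t ^ β
  set ηt := ηbar * t ^ δ
  set x := σbar ^ 2 * ηt * kt / (1 - α)
  have h1α : 0 < 1 - α := by linarith
  have hK : 0 < t / kt * ((1 - α) / α) := by positivity
  calc ‖t / kt * ((1 - α) / α) * ((1 + x) ^ α - 1) - t * σbar ^ 2 * ηt +
        t * σbar ^ 4 * ηt ^ 2 * kt / 2‖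
      = ‖t / kt * ((1 - α) / α) * ((1 + x) ^ α - (1 + α * x + α * (α - 1) / 2 * x ^ 2))‖ := by
        congr 1
        simp only [x]
        field_simp
        ring
    _ = t / kt * ((1 - α) / α) * |(1 + x) ^ α - (1 + α * x + α * (α - 1) / 2 * x ^ 2)| := by
        rw [Real.norm_eq_abs, abs_mul, abs_of_pos hK]
    _ ≤ t / kt * ((1 - α) / α) * (α / 3 * x ^ 3) :=
        mul_le_mul_of_nonneg_left (abs_one_add_rpow_sub_taylor_le hα₀ hα₁ (by positivity)) hK.le
    _ = σbar ^ 6 / (3 * (1 - α) ^ 2) * ‖t * ηt ^ 3 * kt ^ 2‖ := by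
        rw [Real.norm_of_nonneg (by positivity)]
        simp only [x]
        field_simp

/-- if `δ > −min(1,β)` then, as `t → 0⁺`,
`φ_t·t = t·σ̄²·η_t − t·σ̄⁴·η_t²·k_t/2 + O(t·η_t³·k_t²)`. -/
theorem stmt6 (α kbar σbar ηbar β δ : ℝ) (hα : α ∈ Set.Ioo (0:ℝ) 1)
    (hk : 0 < kbar) (hσ : 0 < σbar) (hη : 0 < ηbar)
    (hδ : -min 1 β < δ) :
    (fun t => ATSphi α kbar σbar ηbar β δ t * t - t * σbar ^ 2 * (ηbar * t ^ δ) +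
        t * σbar ^ 4 * (ηbar * t ^ δ) ^ 2 * (kbar * t ^ β) / 2)
      =O[𝓝[>] (0:ℝ)]
      (fun t => t * (ηbar * t ^ δ) ^ 3 * (kbar * t ^ β) ^ 2) :=
  stmt6_general α kbar σbar ηbar β δ hα hk hη
end

section
/- For every t > 0 one has φ_t/(σ̄²·η_t) ≤ 1. Moreover, if δ > −min(1,β), then φ_t/(σ̄²·η_t) → 1 as t → 0⁺. -/
open MeasureTheory Real Filter Set Topology Asymptotics

/-!
Unwinding `L_t`, the ratio `φ_t / (σ̄² η_t)` equals `((1 + u) ^ α - 1) / (α u)` with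
`u = σ̄² η̄ k̄ t^(β+δ) / (1 - α) > 0`. Bernoulli's inequality `(1 + u) ^ α ≤ 1 + α u` gives the bound,
and when `β + δ > 0` we have `u → 0⁺` as `t → 0⁺`, so the ratio tends to the derivative of
`(1 + u) ^ α` at `0` divided by `α`, i.e. to `1`.
-/

noncomputable def rpowIncrementRatio (α a : ℝ) : ℝ :=
  ((1 + a) ^ α - 1) / (α * a)

lemma rpowIncrementRatio_le_one {α a : ℝ} (hα₀ : 0 < α) (hα₁ : α ≤ 1) (ha : 0 < a) :
    rpowIncrementRatio α a ≤ 1 := by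
  have bernoulli : (1 + a) ^ α ≤ 1 + α * a :=
    rpow_one_add_le_one_add_mul_self (by linarith) hα₀.le hα₁
  rw [rpowIncrementRatio, div_le_one (mul_pos hα₀ ha)]
  linarith

lemma tendsto_rpowIncrementRatio {α : ℝ} (hα : α ≠ 0) :
    Tendsto (rpowIncrementRatio α) (𝓝[≠] 0) (𝓝 1) := by
  have hderiv : HasDerivAt (fun x : ℝ => (1 + x) ^ α) α 0 := by
    simpa using ((hasDerivAt_id (0 : ℝ)).const_add 1).rpow_const (p := α) (by simp)
  have hslope := (hasDerivAt_iff_tendsto_slope_zero.mp hderiv).div_const α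
  rw [div_self hα] at hslope
  refine hslope.congr fun a => ?_
  simp only [rpowIncrementRatio, zero_add, add_zero, one_rpow, smul_eq_mul]
  field_simp

lemma tendsto_const_mul_rpow_nhdsGT_zero {c p : ℝ} (hc : 0 < c) (hp : 0 < p) :
    Tendsto (fun t : ℝ => c * t ^ p) (𝓝[>] 0) (𝓝[>] 0) := by
  refine tendsto_nhdsWithin_of_tendsto_nhds_of_eventually_within _ ?_ ?_
  · have hcont : ContinuousAt (fun t : ℝ => c * t ^ p) 0 :=
      (continuousAt_rpow_const 0 p (Or.inr hp.le)).const_mul c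
    simpa [zero_rpow hp.ne'] using hcont.tendsto.mono_left nhdsWithin_le_nhds
  · filter_upwards [self_mem_nhdsWithin] with t (ht : 0 < t)
    exact mul_pos hc (rpow_pos_of_pos ht p)

lemma ATSphi_div_eq_rpowIncrementRatio {α kbar σbar ηbar β δ t : ℝ} (hα : α ≠ 1)
    (hk : kbar ≠ 0) (hσ : σbar ≠ 0) (hη : ηbar ≠ 0) (ht : 0 < t) :
    ATSphi α kbar σbar ηbar β δ t / (σbar ^ 2 * (ηbar * t ^ δ)) =
      rpowIncrementRatio α (σbar ^ 2 * ηbar * kbar / (1 - α) * t ^ (β + δ)) := by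
  have h1α : 1 - α ≠ 0 := sub_ne_zero.mpr (Ne.symm hα)
  have htβ : t ^ β ≠ 0 := (rpow_pos_of_pos ht β).ne'
  have htδ : t ^ δ ≠ 0 := (rpow_pos_of_pos ht δ).ne'
  have harg : t * σbar ^ 2 * (ηbar * t ^ δ) * (kbar * t ^ β) / ((1 - α) * t) =
      σbar ^ 2 * ηbar * kbar / (1 - α) * t ^ (β + δ) := by
    rw [rpow_add ht]
    field_simp
  unfold ATSphi ATSLaplace
  rw [log_exp, harg, rpowIncrementRatio, rpow_add ht]
  field_simp
  ring

/-- `φ_t/(σ̄²·η_t) ≤ 1` for every `t > 0`; moreover if `δ > −min(1,β)`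
then `φ_t/(σ̄²·η_t) → 1` as `t → 0⁺`. -/
theorem stmt7 (α kbar σbar ηbar β δ : ℝ) (hα : α ∈ Set.Ioo (0:ℝ) 1)
    (hk : 0 < kbar) (hσ : 0 < σbar) (hη : 0 < ηbar) :
    (∀ t > 0, ATSphi α kbar σbar ηbar β δ t / (σbar ^ 2 * (ηbar * t ^ δ)) ≤ 1) ∧
    (-min 1 β < δ →
      Tendsto (fun t => ATSphi α kbar σbar ηbar β δ t / (σbar ^ 2 * (ηbar * t ^ δ)))
        (𝓝[>] (0:ℝ)) (𝓝 1)) := by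
  obtain ⟨hα₀, hα₁⟩ := hα
  have hc : 0 < σbar ^ 2 * ηbar * kbar / (1 - α) := by
    have : 0 < 1 - α := by linarith
    positivity
  have hratio : ∀ t > 0, ATSphi α kbar σbar ηbar β δ t / (σbar ^ 2 * (ηbar * t ^ δ)) =
      rpowIncrementRatio α (σbar ^ 2 * ηbar * kbar / (1 - α) * t ^ (β + δ)) :=
    fun t ht => ATSphi_div_eq_rpowIncrementRatio hα₁.ne hk.ne' hσ.ne' hη.ne' ht
  refine ⟨fun t ht => ?_, fun hδ => ?_⟩
  · rw [hratio t ht]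
    exact rpowIncrementRatio_le_one hα₀ hα₁.le (mul_pos hc (rpow_pos_of_pos ht _))
  · have hβδ : 0 < β + δ := by linarith [min_le_right 1 β]
    have hu := (tendsto_const_mul_rpow_nhdsGT_zero hc hβδ).mono_right
      (nhdsGT_le_nhdsNE 0)
    refine ((tendsto_rpowIncrementRatio hα₀.ne').comp hu).congr' ?_
    filter_upwards [self_mem_nhdsWithin] with t ht
    exact (hratio t ht).symm
end

section
/- Assume δ = −1/2 and β > 1/2. Let (X_t)_{t>0} be strictly positive real random variables converging in distribution, as t → 0⁺, to a strictly positive random variable X. Then E[ N( σ̄·η̄·(−√(X_t) + φ_t/(σ̄²·η_t·√(X_t))) − σ̄·√(t·X_t)/2 ) ] → E[ N( σ̄·η̄·(−√X + 1/√X) ) ] as t → 0⁺. -/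
open MeasureTheory Real Filter Set Topology Asymptotics

/-!
Write `a = σ̄η̄` and `c_t = φ_t / (σ̄² η_t)`. Expanding `(1 + w)^α` at `w = 0` gives `c_t → 1`,
since the relevant `w_t` is a multiple of `t^(β+δ)`. The integrand is `N(a(−√x + c/√x) − s√x)`
at `x = X_t`, with `c = c_t` and `s = σ̄√t/2 → 0`. It is monotone in `c` and antitone in `s`, so
for small `t` it is squeezed between the profiles with parameters `(1 − η, η)` and `(1 + η, −η)`.
Extended by `1` on `x ≤ 0`, these profiles are bounded continuous functions, so convergence in
distribution applies to them; as `η → 0` their expectations under the limit law tend to that of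
the profile `(1, 0)` by dominated convergence.
-/

lemma exp_neg_sq_div_two_eq (x : ℝ) : exp (-x ^ 2 / 2) = exp (-(1 / 2) * x ^ 2) := by
  ring_nf

lemma integrable_exp_neg_sq_div_two : Integrable fun x : ℝ => exp (-x ^ 2 / 2) := by
  simpa only [exp_neg_sq_div_two_eq] using
    integrable_exp_neg_mul_sq (by norm_num : (0:ℝ) < 1 / 2)

lemma integral_exp_neg_sq_div_two : ∫ x : ℝ, exp (-x ^ 2 / 2) = √(2 * π) := by
  simp only [exp_neg_sq_div_two_eq, integral_gaussian]
  congr 1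
  field_simp

lemma monotone_stdN : Monotone stdN := fun a b hab =>
  mul_le_mul_of_nonneg_left
    (setIntegral_mono_set integrable_exp_neg_sq_div_two.integrableOn
      (.of_forall fun x => (exp_pos _).le) (Iic_subset_Iic.2 hab).eventuallyLE)
    (by positivity)

lemma continuous_stdN : Continuous stdN := by
  refine continuous_const.mul (continuous_iff_continuousAt.2 fun z => ?_)
  exact (integrable_exp_neg_sq_div_two.integrableOn.continuousOn_Iic_primitive_Iic
    (a₀ := z + 1)).continuousAt (Iic_mem_nhds (by linarith))

lemma tendsto_stdN_atTop : Tendsto stdN atTop (𝓝 1) := by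
  have h := (aecover_Iic (μ := volume) tendsto_id).integral_tendsto_of_countably_generated
    integrable_exp_neg_sq_div_two
  rw [integral_exp_neg_sq_div_two] at h
  rw [← inv_mul_cancel₀ (by positivity : √(2 * π) ≠ 0)]
  exact h.const_mul _

lemma stdN_nonneg (z : ℝ) : 0 ≤ stdN z :=
  mul_nonneg (by positivity) (setIntegral_nonneg measurableSet_Iic fun x _ => (exp_pos _).le)

lemma stdN_le_one (z : ℝ) : stdN z ≤ 1 :=
  monotone_stdN.ge_of_tendsto tendsto_stdN_atTop z

lemma tendsto_one_add_rpow_sub_one_div {α : ℝ} (hα : α ≠ 0) :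
    Tendsto (fun y : ℝ => ((1 + y) ^ α - 1) / (α * y)) (𝓝[≠] 0) (𝓝 1) := by
  have hderiv : HasDerivAt (fun y : ℝ => (1 + y) ^ α) α 0 := by
    simpa using ((hasDerivAt_id (0:ℝ)).const_add 1).rpow_const (p := α) (by norm_num)
  have h := (hasDerivAt_iff_tendsto_slope.mp hderiv).div_const α
  rw [div_self hα] at h
  refine h.congr fun y => ?_
  simp only [slope_def_field, add_zero, one_rpow, sub_zero]
  rw [div_div, mul_comm y α]

lemma ATSphi_div_eq (α kbar σbar ηbar β δ : ℝ) {t : ℝ} (ht : 0 < t) :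
    ATSphi α kbar σbar ηbar β δ t / (σbar ^ 2 * (ηbar * t ^ δ)) =
      let w := σbar ^ 2 * ηbar * kbar / (1 - α) * t ^ (β + δ)
      ((1 + w) ^ α - 1) / (α * w) := by
  have hw : t * σbar ^ 2 * (ηbar * t ^ δ) * (kbar * t ^ β) / ((1 - α) * t) =
      σbar ^ 2 * ηbar * kbar / (1 - α) * t ^ (β + δ) := by
    rw [rpow_add ht]; field_simp
  simp only [ATSphi, ATSLaplace, log_exp, hw]
  rw [rpow_add ht]
  field_simp
  ring

lemma tendsto_ATSphi_div {α kbar σbar ηbar β δ : ℝ} (hα₀ : α ≠ 0) (hα₁ : α ≠ 1)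
    (hk : kbar ≠ 0) (hσ : σbar ≠ 0) (hη : ηbar ≠ 0) (hβδ : 0 < β + δ) :
    Tendsto (fun t => ATSphi α kbar σbar ηbar β δ t / (σbar ^ 2 * (ηbar * t ^ δ)))
      (𝓝[>] 0) (𝓝 1) := by
  set C := σbar ^ 2 * ηbar * kbar / (1 - α)
  have hC : C ≠ 0 := div_ne_zero (by positivity) (sub_ne_zero.2 hα₁.symm)
  have hw : Tendsto (fun t : ℝ => C * t ^ (β + δ)) (𝓝[>] 0) (𝓝[≠] 0) := by
    refine tendsto_nhdsWithin_of_tendsto_nhds_of_eventually_within _ ?_ ?_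
    · have h := ((continuousAt_rpow_const 0 _ (Or.inr hβδ.le)).tendsto.const_mul C).mono_left
        (nhdsWithin_le_nhds (s := Ioi 0))
      rwa [zero_rpow hβδ.ne', mul_zero] at h
    · filter_upwards [self_mem_nhdsWithin] with t ht
      exact mul_ne_zero hC (rpow_pos_of_pos ht _).ne'
  refine ((tendsto_one_add_rpow_sub_one_div hα₀).comp hw).congr' ?_
  filter_upwards [self_mem_nhdsWithin] with t ht
  exact (ATSphi_div_eq α kbar σbar ηbar β δ ht).symm

/-- The value `1` on `x ≤ 0` is the limit at `0⁺`; it makes the profile a bounded continuous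
function on `ℝ`, so that it can be tested against convergence in distribution. -/
noncomputable def normalProfile (a c s x : ℝ) : ℝ :=
  if x ≤ 0 then 1 else stdN (a * (-√x + c / √x) - s * √x)

lemma normalProfile_of_pos {a c s x : ℝ} (hx : 0 < x) :
    normalProfile a c s x = stdN (a * (-√x + c / √x) - s * √x) :=
  if_neg hx.not_ge

lemma normalProfile_nonneg (a c s x : ℝ) : 0 ≤ normalProfile a c s x := by
  unfold normalProfile; split_ifs
  exacts [zero_le_one, stdN_nonneg _]

lemma normalProfile_le_one (a c s x : ℝ) : normalProfile a c s x ≤ 1 := by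
  unfold normalProfile; split_ifs
  exacts [le_rfl, stdN_le_one _]

lemma norm_normalProfile_le_one (a c s x : ℝ) : ‖normalProfile a c s x‖ ≤ 1 := by
  rw [norm_eq_abs, abs_of_nonneg (normalProfile_nonneg ..)]
  exact normalProfile_le_one ..

lemma measurable_normalProfile (a c s : ℝ) : Measurable (normalProfile a c s) :=
  Measurable.ite measurableSet_Iic measurable_const
    (continuous_stdN.measurable.comp (by fun_prop))

lemma normalProfile_mono {a c c' s s' : ℝ} (ha : 0 ≤ a) (hc : c ≤ c') (hs : s' ≤ s) (x : ℝ) :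
    normalProfile a c s x ≤ normalProfile a c' s' x := by
  rcases le_or_gt x 0 with hx | hx
  · simp only [normalProfile, if_pos hx, le_rfl]
  · rw [normalProfile_of_pos hx, normalProfile_of_pos hx]
    exact monotone_stdN (by gcongr)

lemma tendsto_normalProfile_arg_nhdsGT_zero {a c : ℝ} (ha : 0 < a) (hc : 0 < c) (s : ℝ) :
    Tendsto (fun x => a * (-√x + c / √x) - s * √x) (𝓝[>] 0) atTop := by
  have hsqrt : Tendsto (√·) (𝓝[>] (0:ℝ)) (𝓝[>] 0) :=
    tendsto_nhdsWithin_of_tendsto_nhds_of_eventually_within _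
      (by simpa using continuous_sqrt.tendsto' 0 0 sqrt_zero |>.mono_left nhdsWithin_le_nhds)
      (by filter_upwards [self_mem_nhdsWithin] with x hx using sqrt_pos.2 hx)
  have hinv := (tendsto_inv_nhdsGT_zero.comp hsqrt).const_mul_atTop (mul_pos ha hc)
  have hlin := (tendsto_nhds_of_tendsto_nhdsWithin hsqrt).const_mul (-(a + s))
  rw [mul_zero] at hlin
  refine (hinv.atTop_add hlin).congr fun x => ?_
  simp only [Function.comp_apply]
  ring

lemma continuous_normalProfile {a c : ℝ} (ha : 0 < a) (hc : 0 < c) (s : ℝ) :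
    Continuous (normalProfile a c s) := by
  refine continuous_iff_continuousAt.2 fun x => ?_
  rcases lt_trichotomy x 0 with hx | rfl | hx
  · refine (continuousAt_const (y := 1)).congr ?_
    filter_upwards [Iio_mem_nhds hx] with y hy using (if_pos hy.le).symm
  · refine continuousAt_iff_continuous_left_right.2 ⟨?_, ?_⟩
    · exact continuousWithinAt_const.congr (fun y hy => if_pos hy) (if_pos le_rfl)
    · rw [← continuousWithinAt_Ioi_iff_Ici, ContinuousWithinAt, normalProfile, if_pos le_rfl]
      refine (tendsto_stdN_atTop.comp (tendsto_normalProfile_arg_nhdsGT_zero ha hc s)).congr' ?_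
      filter_upwards [self_mem_nhdsWithin] with y hy using (normalProfile_of_pos hy).symm
  · refine ContinuousAt.congr ?_ (by filter_upwards [Ioi_mem_nhds hx] with y hy using
      (normalProfile_of_pos hy).symm)
    have : √x ≠ 0 := (sqrt_pos.2 hx).ne'
    exact continuous_stdN.continuousAt.comp (by fun_prop (disch := exact this))

lemma continuous_normalProfile_param (a x : ℝ) :
    Continuous fun p : ℝ × ℝ => normalProfile a p.1 p.2 x := by
  unfold normalProfile; split_ifs
  exacts [continuous_const, continuous_stdN.comp (by fun_prop)]

noncomputable def normalProfileBCF {a c : ℝ} (ha : 0 < a) (hc : 0 < c) (s : ℝ) :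
    BoundedContinuousFunction ℝ ℝ :=
  .mkOfBound ⟨normalProfile a c s, continuous_normalProfile ha hc s⟩ 1 fun x y => by
    rw [ContinuousMap.coe_mk, dist_eq, abs_le]
    constructor <;> linarith [normalProfile_nonneg a c s x, normalProfile_le_one a c s x,
      normalProfile_nonneg a c s y, normalProfile_le_one a c s y]

section Integral

variable {Ω : Type*} [MeasurableSpace Ω] {P : Measure Ω} [IsFiniteMeasure P]

lemma integrable_normalProfile_comp (a c s : ℝ) {Y : Ω → ℝ} (hY : Measurable Y) :
    Integrable (fun ω => normalProfile a c s (Y ω)) P :=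
  .of_bound ((measurable_normalProfile a c s).comp hY).aestronglyMeasurable 1
    (.of_forall fun _ => norm_normalProfile_le_one ..)

lemma continuous_integral_normalProfile (a : ℝ) {Y : Ω → ℝ} (hY : Measurable Y) :
    Continuous fun p : ℝ × ℝ => ∫ ω, normalProfile a p.1 p.2 (Y ω) ∂P :=
  continuous_of_dominated (bound := fun _ => 1)
    (fun p => (integrable_normalProfile_comp a p.1 p.2 hY).aestronglyMeasurable)
    (fun _ => .of_forall fun _ => norm_normalProfile_le_one ..)
    (integrable_const 1) (.of_forall fun ω => continuous_normalProfile_param a (Y ω))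

variable {ι : Type*} {l : Filter ι} {a : ℝ} {c s : ι → ℝ} {X : ι → Ω → ℝ} {Xlim : Ω → ℝ}

lemma eventually_lt_integral_normalProfile (ha : 0 < a) (hc : Tendsto c l (𝓝 1))
    (hs : Tendsto s l (𝓝 0)) (hXm : ∀ᶠ i in l, Measurable (X i)) (hXlimm : Measurable Xlim)
    (hconv : ∀ f : BoundedContinuousFunction ℝ ℝ,
      Tendsto (fun i => ∫ ω, f (X i ω) ∂P) l (𝓝 (∫ ω, f (Xlim ω) ∂P))) {b : ℝ}
    (hb : b < ∫ ω, normalProfile a 1 0 (Xlim ω) ∂P) :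
    ∀ᶠ i in l, b < ∫ ω, normalProfile a (c i) (s i) (X i ω) ∂P := by
  have hpath : Tendsto (fun η : ℝ => ((1 - η, η) : ℝ × ℝ)) (𝓝[>] 0) (𝓝 (1, 0)) :=
    (((continuous_const.sub continuous_id).prodMk continuous_id).tendsto' 0 (1, 0)
      (by simp)).mono_left nhdsWithin_le_nhds
  have hlower := ((continuous_integral_normalProfile (P := P) a hXlimm).tendsto (1, 0)).comp hpath
  obtain ⟨η, hbη, hη⟩ :=
    ((hlower.eventually (lt_mem_nhds hb)).and (Ioo_mem_nhdsGT one_pos)).exists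
  filter_upwards [(hconv (normalProfileBCF ha (sub_pos.2 hη.2) η)).eventually (lt_mem_nhds hbη),
    hc.eventually (Ioi_mem_nhds (sub_lt_self 1 hη.1)), hs.eventually (Iio_mem_nhds hη.1), hXm]
    with i hi hci hsi hXi
  exact hi.trans_le (integral_mono (integrable_normalProfile_comp _ _ _ hXi)
    (integrable_normalProfile_comp _ _ _ hXi) fun ω => normalProfile_mono ha.le hci.le hsi.le _)

lemma eventually_integral_normalProfile_lt (ha : 0 < a) (hc : Tendsto c l (𝓝 1))
    (hs : Tendsto s l (𝓝 0)) (hXm : ∀ᶠ i in l, Measurable (X i)) (hXlimm : Measurable Xlim)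
    (hconv : ∀ f : BoundedContinuousFunction ℝ ℝ,
      Tendsto (fun i => ∫ ω, f (X i ω) ∂P) l (𝓝 (∫ ω, f (Xlim ω) ∂P))) {b : ℝ}
    (hb : ∫ ω, normalProfile a 1 0 (Xlim ω) ∂P < b) :
    ∀ᶠ i in l, ∫ ω, normalProfile a (c i) (s i) (X i ω) ∂P < b := by
  have hpath : Tendsto (fun η : ℝ => ((1 + η, -η) : ℝ × ℝ)) (𝓝[>] 0) (𝓝 (1, 0)) :=
    (((continuous_const.add continuous_id).prodMk continuous_id.neg).tendsto' 0 (1, 0)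
      (by simp)).mono_left nhdsWithin_le_nhds
  have hupper := ((continuous_integral_normalProfile (P := P) a hXlimm).tendsto (1, 0)).comp hpath
  obtain ⟨η, hbη, hη⟩ :=
    ((hupper.eventually (gt_mem_nhds hb)).and self_mem_nhdsWithin).exists
  filter_upwards [(hconv (normalProfileBCF ha (by linarith [hη]) (-η))).eventually
      (gt_mem_nhds hbη),
    hc.eventually (Iio_mem_nhds (lt_add_of_pos_right 1 hη)),
    hs.eventually (Ioi_mem_nhds (neg_lt_zero.2 hη)), hXm]
    with i hi hci hsi hXi
  exact (integral_mono (integrable_normalProfile_comp _ _ _ hXi)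
    (integrable_normalProfile_comp _ _ _ hXi) fun ω =>
      normalProfile_mono ha.le hci.le hsi.le _).trans_lt hi

theorem tendsto_integral_normalProfile (ha : 0 < a) (hc : Tendsto c l (𝓝 1))
    (hs : Tendsto s l (𝓝 0)) (hXm : ∀ᶠ i in l, Measurable (X i)) (hXlimm : Measurable Xlim)
    (hconv : ∀ f : BoundedContinuousFunction ℝ ℝ,
      Tendsto (fun i => ∫ ω, f (X i ω) ∂P) l (𝓝 (∫ ω, f (Xlim ω) ∂P))) :
    Tendsto (fun i => ∫ ω, normalProfile a (c i) (s i) (X i ω) ∂P) l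
      (𝓝 (∫ ω, normalProfile a 1 0 (Xlim ω) ∂P)) :=
  tendsto_order.2 ⟨fun _ hb => eventually_lt_integral_normalProfile ha hc hs hXm hXlimm hconv hb,
    fun _ hb => eventually_integral_normalProfile_lt ha hc hs hXm hXlimm hconv hb⟩

end Integral

/-- for `δ = −1/2` and `β > 1/2`, if the strictly positive random
variables `X_t` converge in distribution to a strictly positive `X` as `t → 0⁺`, then
`E[N(σ̄·η̄·(−√X_t + φ_t/(σ̄²·η_t·√X_t)) − σ̄·√(t·X_t)/2)] → E[N(σ̄·η̄·(−√X + 1/√X))]`. -/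
theorem stmt10 (α kbar σbar ηbar β δ : ℝ) (hα : α ∈ Set.Ioo (0:ℝ) 1)
    (hk : 0 < kbar) (hσ : 0 < σbar) (hη : 0 < ηbar)
    (hδ : δ = -(1/2)) (hβ : 1/2 < β)
    {Ω : Type*} [MeasurableSpace Ω] (P : Measure Ω) [IsProbabilityMeasure P]
    (X : ℝ → Ω → ℝ) (Xlim : Ω → ℝ)
    (hXm : ∀ t > 0, Measurable (X t)) (hXlimm : Measurable Xlim)
    (hXpos : ∀ t > 0, ∀ ω, 0 < X t ω) (hXlimpos : ∀ ω, 0 < Xlim ω)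
    (hconv : ∀ f : BoundedContinuousFunction ℝ ℝ,
      Tendsto (fun t => ∫ ω, f (X t ω) ∂P) (𝓝[>] (0:ℝ)) (𝓝 (∫ ω, f (Xlim ω) ∂P))) :
    Tendsto
      (fun t => ∫ ω, stdN (σbar * ηbar *
          (-Real.sqrt (X t ω) + ATSphi α kbar σbar ηbar β δ t /
            (σbar ^ 2 * (ηbar * t ^ δ) * Real.sqrt (X t ω))) -
          σbar * Real.sqrt (t * X t ω) / 2) ∂P)
      (𝓝[>] (0:ℝ))
      (𝓝 (∫ ω, stdN (σbar * ηbar * (-Real.sqrt (Xlim ω) + 1 / Real.sqrt (Xlim ω))) ∂P)) := by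
  have hc := tendsto_ATSphi_div hα.1.ne' hα.2.ne hk.ne' hσ.ne' hη.ne' (by linarith : 0 < β + δ)
  have hs : Tendsto (fun t : ℝ => σbar * √t / 2) (𝓝[>] 0) (𝓝 0) := by
    simpa using ((continuous_sqrt.tendsto 0).const_mul σbar).div_const 2 |>.mono_left
      nhdsWithin_le_nhds
  have h := tendsto_integral_normalProfile (P := P) (mul_pos hσ hη) hc hs
    (eventually_nhdsWithin_of_forall hXm) hXlimm hconv
  simp only [normalProfile_of_pos (hXlimpos _), zero_mul, sub_zero] at h
  refine h.congr' ?_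
  filter_upwards [self_mem_nhdsWithin] with t ht
  refine integral_congr_ae (.of_forall fun ω => ?_)
  dsimp only
  rw [normalProfile_of_pos (hXpos t ht ω), sqrt_mul ht.le, ← div_div]
  congr 1
  ring
end
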